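/- In a directed graph consisting of disjoint 'variable gadgets' joined only through 'clause nodes', any directed cycle of length at most 3 either lies entirely within a single variable gadget, or consists of exactly one β-node and one clause node (a 2-cycle), or consists of the special node d and one clause node (a 2-cycle). In particular, no 3-cycle packing contains a cycle meeting two distinct variable gadgets. -/

import Mathlib

variable {V : Type*} [DecidableEq V]

/-- A directed (simple) cycle given as a list of distinct vertices. -/
def IsDicycle (A : V → V → Prop) (c : List V) : Prop :=
  2 ≤ c.length ∧ c.Nodup ∧ c.Chain' A ∧
    ∀ h : c ≠ [], A (c.getLast h) (c.head h)

def cycVerts (c : List V) : Set V := {v | v ∈ c}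

/-- A `K`-cycle packing inside the vertex set `W`. -/
def IsCyclePackingOn (A : V → V → Prop) (K : ℕ) (W : Set V) (P : Finset (List V)) : Prop :=
  (∀ c ∈ P, IsDicycle A c ∧ c.length ≤ K ∧ ∀ v ∈ c, v ∈ W) ∧
  (P : Set (List V)).Pairwise fun c d => ∀ v, v ∈ c → v ∉ d

def packSize (P : Finset (List V)) : ℕ := ∑ c ∈ P, c.length

def pcovered (P : Finset (List V)) : Set V := {v | ∃ c ∈ P, v ∈ c}

/-- Maximum size of a `K`-cycle packing on `G[W]`. -/
noncomputable def wDir (A : V → V → Prop) (K : ℕ) (W : Set V) : ℕ :=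
  sSup {n | ∃ P, IsCyclePackingOn A K W P ∧ packSize P = n}

/-- Minimum number of `L`-nodes covered over all maximum `K`-cycle packings on `G[W]`. -/
noncomputable def wLDir (A : V → V → Prop) (K : ℕ) (L W : Set V) : ℕ :=
  sInf {k | ∃ P, IsCyclePackingOn A K W P ∧ packSize P = wDir A K W ∧
    (pcovered P ∩ L).ncard = k}

/-- The nodes of a variable gadget: `α_i`, `β_{pol,i}` and the leaf nodes
(`t/τ` for `pol = true`, `f/φ` for `pol = false`). -/
inductive GNode : Type
  | alpha (i : Fin 2)
  | beta (pol : Bool) (i : Fin 2)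
  | leaf (pol : Bool) (i : Fin 2)
deriving DecidableEq

/-- The internal arcs of a variable gadget. -/
def gadgetArc : GNode → GNode → Prop
  | .alpha i, .beta _ j => i = j
  | .beta pol i, .leaf pol' j => pol = pol' ∧ i = j
  | .leaf _ i, .alpha j => i = j
  | .leaf pol i, .leaf pol' j => pol = pol' ∧ i ≠ j
  | _, _ => False

/-- Vertices of the KEP construction: gadget nodes (one gadget per variable in `ι`),
clause nodes (`Fin m`), and the special node `d` (`Unit`). -/
abbrev KVert (ι : Type*) (m : ℕ) := (ι × GNode) ⊕ (Fin m) ⊕ Unit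

/-- The arcs of the KEP construction: gadget-internal arcs, 2-cycles between each clause
node `δ_c` and `d`, and 2-cycles between `δ_c` and `β_{v,pol,i}` exactly when `c` is the
`i`-th clause containing the literal `(v, pol)` (recorded by `occ`). -/
def kepArc {ι : Type*} {m : ℕ} (occ : ι → Bool → Fin 2 → Fin m) :
    KVert ι m → KVert ι m → Prop := fun a b =>
  match a, b with
  | .inl (v, x), .inl (w, y) => v = w ∧ gadgetArc x y
  | .inl (v, .beta pol i), .inr (.inl c) => occ v pol i = c
  | .inr (.inl c), .inl (v, .beta pol i) => occ v pol i = c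
  | .inr (.inl _), .inr (.inr _) => True
  | .inr (.inr _), .inr (.inl _) => True
  | _, _ => False

/-!
A clause node `δ` is adjacent only to "ports" (the `β`-nodes and `d`), there are no arcs between
two ports and none between two clause nodes, and `d` is adjacent only to clause nodes. Hence a
triangle through `δ` would need an arc between two ports, and a triangle through `d` passes
through a clause node; so triangles consist of gadget nodes, and gadget arcs never change the
variable. Likewise a single arc at a clause node joins it to a port, which gives the two other
shapes of 2-cycles.
-/

theorem IsDicycle.pair {α : Type*} {A : α → α → Prop} {a b : α} (h : IsDicycle A [a, b]) :
    A a b ∧ A b a :=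
  ⟨(List.isChain_cons_cons.mp h.2.2.1).1, h.2.2.2 (List.cons_ne_nil _ _)⟩

theorem IsDicycle.triple {α : Type*} {A : α → α → Prop} {a b e : α}
    (h : IsDicycle A [a, b, e]) : A a b ∧ A b e ∧ A e a := by
  obtain ⟨hab, hchain⟩ := List.isChain_cons_cons.mp h.2.2.1
  exact ⟨hab, (List.isChain_cons_cons.mp hchain).1, h.2.2.2 (List.cons_ne_nil _ _)⟩

theorem cycVerts_pair {α : Type*} (a b : α) : cycVerts [a, b] = {a, b} := by
  ext; simp [cycVerts]

section KEP

variable {ι : Type*} {m : ℕ} {occ : ι → Bool → Fin 2 → Fin m}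

def IsPort : KVert ι m → Prop
  | .inl (_, .beta _ _) => True
  | .inr (.inr _) => True
  | _ => False

namespace kepArc

theorem fst_eq {v w : ι} {x y : GNode} (h : kepArc occ (.inl (v, x)) (.inl (w, y))) : v = w :=
  h.1

theorem exists_beta_of_inl_clause {v : ι} {x : GNode} {c : Fin m}
    (h : kepArc occ (.inl (v, x)) (.inr (.inl c))) : ∃ pol i, x = .beta pol i := by
  cases x <;> simp_all [kepArc]

theorem exists_beta_of_clause_inl {v : ι} {x : GNode} {c : Fin m}
    (h : kepArc occ (.inr (.inl c)) (.inl (v, x))) : ∃ pol i, x = .beta pol i := by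
  cases x <;> simp_all [kepArc]

theorem isPort_of_clause_left {c : Fin m} {b : KVert ι m}
    (h : kepArc occ (.inr (.inl c)) b) : IsPort b := by
  rcases b with ⟨w, _ | _ | _⟩ | _ | _ <;> simp_all [kepArc, IsPort]

theorem isPort_of_clause_right {c : Fin m} {a : KVert ι m}
    (h : kepArc occ a (.inr (.inl c))) : IsPort a := by
  rcases a with ⟨w, _ | _ | _⟩ | _ | _ <;> simp_all [kepArc, IsPort]

theorem exists_clause_of_d_left {u : Unit} {b : KVert ι m}
    (h : kepArc occ (.inr (.inr u)) b) : ∃ c, b = .inr (.inl c) := by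
  rcases b with ⟨w, _⟩ | c | _ <;> simp_all [kepArc]

theorem not_of_isPort {a b : KVert ι m} (ha : IsPort a) (hb : IsPort b) : ¬ kepArc occ a b := by
  rcases a with ⟨v, _ | _ | _⟩ | _ | _ <;> rcases b with ⟨w, _ | _ | _⟩ | _ | _ <;>
    simp_all [kepArc, IsPort, gadgetArc]

theorem exists_inl_of_triangle {a b e : KVert ι m} (hab : kepArc occ a b) (hbe : kepArc occ b e)
    (hea : kepArc occ e a) : ∃ v x, a = .inl (v, x) := by
  rcases a with ⟨v, x⟩ | c | u
  · exact ⟨v, x, rfl⟩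
  · exact absurd hbe (not_of_isPort (isPort_of_clause_left hab) (isPort_of_clause_right hea))
  · obtain ⟨c, rfl⟩ := exists_clause_of_d_left hab
    exact absurd hea (not_of_isPort (isPort_of_clause_left hbe) trivial)

end kepArc

open kepArc

theorem kepArc_triangle_in_gadget {a b e : KVert ι m} (hab : kepArc occ a b)
    (hbe : kepArc occ b e) (hea : kepArc occ e a) :
    ∃ v : ι, ∀ x ∈ [a, b, e], ∃ g : GNode, x = .inl (v, g) := by
  obtain ⟨v, x, rfl⟩ := exists_inl_of_triangle hab hbe hea
  obtain ⟨w, y, rfl⟩ := exists_inl_of_triangle hbe hea hab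
  obtain ⟨z, t, rfl⟩ := exists_inl_of_triangle hea hab hbe
  obtain rfl := hab.fst_eq
  obtain rfl := hbe.fst_eq
  refine ⟨v, ?_⟩
  simp

theorem kepArc_pair_shape {a b : KVert ι m} (hab : kepArc occ a b) :
    (∃ v : ι, ∀ x ∈ [a, b], ∃ g : GNode, x = .inl (v, g)) ∨
    (∃ (v : ι) (pol : Bool) (i : Fin 2) (cl : Fin m),
      cycVerts [a, b] = {.inl (v, .beta pol i), .inr (.inl cl)}) ∨
    (∃ cl : Fin m, cycVerts [a, b] = {.inr (.inr ()), .inr (.inl cl)}) := by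
  rw [cycVerts_pair]
  rcases a with ⟨v, x⟩ | c | ⟨⟩ <;> rcases b with ⟨w, y⟩ | c' | ⟨⟩
  · obtain rfl := hab.fst_eq
    exact Or.inl ⟨v, by simp⟩
  · obtain ⟨pol, i, rfl⟩ := exists_beta_of_inl_clause hab
    exact Or.inr (Or.inl ⟨v, pol, i, c', rfl⟩)
  · exact hab.elim
  · obtain ⟨pol, i, rfl⟩ := exists_beta_of_clause_inl hab
    exact Or.inr (Or.inl ⟨w, pol, i, c, Set.pair_comm _ _⟩)
  · exact hab.elim
  · exact Or.inr (Or.inr ⟨c, Set.pair_comm _ _⟩)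
  · exact hab.elim
  · exact Or.inr (Or.inr ⟨c', rfl⟩)
  · exact hab.elim

theorem kepArc_short_cycle_shape {c : List (KVert ι m)} (hc : IsDicycle (kepArc occ) c)
    (hlen : c.length ≤ 3) :
    (∃ v : ι, ∀ a ∈ c, ∃ g : GNode, a = .inl (v, g)) ∨
    (∃ (v : ι) (pol : Bool) (i : Fin 2) (cl : Fin m),
      cycVerts c = {.inl (v, .beta pol i), .inr (.inl cl)}) ∨
    (∃ cl : Fin m, cycVerts c = {.inr (.inr ()), .inr (.inl cl)}) := by
  rcases c with _ | ⟨a, _ | ⟨b, _ | ⟨e, _ | ⟨_, _⟩⟩⟩⟩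
  · exact absurd hc.1 (by simp)
  · exact absurd hc.1 (by simp)
  · exact kepArc_pair_shape hc.pair.1
  · obtain ⟨hab, hbe, hea⟩ := hc.triple
    exact Or.inl (kepArc_triangle_in_gadget hab hbe hea)
  · exact absurd hlen (by simp)

theorem eq_of_inl_mem_short_cycle {c : List (KVert ι m)} (hc : IsDicycle (kepArc occ) c)
    (hlen : c.length ≤ 3) {v w : ι} {x y : GNode} (hv : .inl (v, x) ∈ c) (hw : .inl (w, y) ∈ c) :
    v = w := by
  rcases kepArc_short_cycle_shape hc hlen with ⟨u, hu⟩ | ⟨u, pol, i, cl, hset⟩ | ⟨cl, hset⟩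
  · obtain ⟨_, hvu⟩ := hu _ hv
    obtain ⟨_, hwu⟩ := hu _ hw
    simp only [Sum.inl.injEq, Prod.mk.injEq] at hvu hwu
    rw [hvu.1, hwu.1]
  · have hv' : _ ∈ cycVerts c := hv
    have hw' : _ ∈ cycVerts c := hw
    simp only [hset, Set.mem_insert_iff, Set.mem_singleton_iff, Sum.inl.injEq, Prod.mk.injEq,
      reduceCtorEq, or_false] at hv' hw'
    rw [hv'.1, hw'.1]
  · have hv' : _ ∈ cycVerts c := hv
    simp [hset] at hv'

end KEP

theorem stmt6_general {ι : Type*} {m : ℕ} (occ : ι → Bool → Fin 2 → Fin m) :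
    (∀ c : List (KVert ι m), IsDicycle (kepArc occ) c → c.length ≤ 3 →
      (∃ v : ι, ∀ a ∈ c, ∃ g : GNode, a = Sum.inl (v, g)) ∨
      (∃ (v : ι) (pol : Bool) (i : Fin 2) (cl : Fin m),
        cycVerts c = {Sum.inl (v, GNode.beta pol i), Sum.inr (Sum.inl cl)}) ∨
      (∃ cl : Fin m,
        cycVerts c = {Sum.inr (Sum.inr ()), Sum.inr (Sum.inl cl)})) ∧
    (∀ P, IsCyclePackingOn (kepArc occ) 3 Set.univ P → ∀ c ∈ P,
      ¬ ∃ v w : ι, v ≠ w ∧ (∃ g : GNode, Sum.inl (v, g) ∈ c) ∧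
        (∃ g : GNode, Sum.inl (w, g) ∈ c)) := by
  refine ⟨fun c hc hlen => kepArc_short_cycle_shape hc hlen, ?_⟩
  rintro P hP c hcP ⟨v, w, hvw, ⟨x, hv⟩, ⟨y, hw⟩⟩
  obtain ⟨hc, hlen, -⟩ := hP.1 c hcP
  exact hvw (eq_of_inl_mem_short_cycle hc hlen hv hw)

/-- in the KEP construction, every directed cycle of length at most 3 lies
inside a single variable gadget, or is a 2-cycle on one `β`-node and one clause node, or
is a 2-cycle on `d` and one clause node; in particular no cycle of a 3-cycle packing
meets two distinct variable gadgets. -/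
theorem stmt6 {ι : Type*} [DecidableEq ι] {m : ℕ} (occ : ι → Bool → Fin 2 → Fin m) :
    (∀ c : List (KVert ι m), IsDicycle (kepArc occ) c → c.length ≤ 3 →
      (∃ v : ι, ∀ a ∈ c, ∃ g : GNode, a = Sum.inl (v, g)) ∨
      (∃ (v : ι) (pol : Bool) (i : Fin 2) (cl : Fin m),
        cycVerts c = {Sum.inl (v, GNode.beta pol i), Sum.inr (Sum.inl cl)}) ∨
      (∃ cl : Fin m,
        cycVerts c = {Sum.inr (Sum.inr ()), Sum.inr (Sum.inl cl)})) ∧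
    (∀ P, IsCyclePackingOn (kepArc occ) 3 Set.univ P → ∀ c ∈ P,
      ¬ ∃ v w : ι, v ≠ w ∧ (∃ g : GNode, Sum.inl (v, g) ∈ c) ∧
        (∃ g : GNode, Sum.inl (w, g) ∈ c)) :=
  stmt6_general occ
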